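/- arXiv:2006.11736 — 7 statements merged into one kernel-verified Lean document; each statement's English description precedes it below -/
import Mathlib

section
/- Let P be a polynomial functor on Type u and let (X, sup) be a P-algebra that is initial, i.e. for every P-algebra (Y, sup') there is exactly one P-algebra homomorphism from (X, sup) to (Y, sup'). Then (X, sup) is inductive: every displayed P-algebra over (X, sup) has a section. -/
universe u

/-- `k` is a `P`-algebra homomorphism from `(X, sup)` to `(Y, sup')`. -/
def IsAlgHom {A : Type u} {B : A → Type u} {X Y : Type u}
    (sup : ∀ a : A, (B a → X) → X) (sup' : ∀ a : A, (B a → Y) → Y)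
    (k : X → Y) : Prop :=
  ∀ (a : A) (g : B a → X), k (sup a g) = sup' a (k ∘ g)

/-- `(X, sup)` is an initial `P`-algebra: every `P`-algebra admits exactly one
homomorphism from it. -/
def IsInitialAlg {A : Type u} {B : A → Type u} {X : Type u}
    (sup : ∀ a : A, (B a → X) → X) : Prop :=
  ∀ (Y : Type u) (sup' : ∀ a : A, (B a → Y) → Y),
    ∃! k : X → Y, IsAlgHom sup sup' k

/-- `(X, sup)` is inductive: every displayed `P`-algebra over it has a section. -/
def IsInductiveAlg {A : Type u} {B : A → Type u} {X : Type u}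
    (sup : ∀ a : A, (B a → X) → X) : Prop :=
  ∀ (D : X → Type u)
    (supD : ∀ (a : A) (g : B a → X), (∀ b, D (g b)) → D (sup a g)),
    ∃ h : ∀ x, D x, ∀ (a : A) (g : B a → X), h (sup a g) = supD a g (fun b => h (g b))

/-- an initial `P`-algebra is inductive. -/
theorem initial_alg_isInductive {A : Type u} {B : A → Type u}
    (X : Type u) (sup : ∀ a : A, (B a → X) → X)
    (hinit : IsInitialAlg sup) :
    IsInductiveAlg sup := by
  intro D supD
  -- total algebra on the sigma type
  set Y : Type u := Σ x, D x with hY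
  set sup' : ∀ a : A, (B a → Y) → Y :=
    fun a g => ⟨sup a (fun b => (g b).1), supD a (fun b => (g b).1) (fun b => (g b).2)⟩
    with hsup'
  obtain ⟨k, hk, -⟩ := hinit Y sup'
  -- first projection of k is an algebra endomorphism of X, hence the identity
  have hfst : (fun x => (k x).1) = id := by
    obtain ⟨e, -, he⟩ := hinit X sup
    have h1 : (fun x => (k x).1) = e := by
      apply he
      intro a g
      simp only [hk a g]
      rfl
    have h2 : (id : X → X) = e := by
      apply he
      intro a g
      rfl
    rw [h1, h2]
  have hfst' : ∀ x, (k x).1 = x := fun x => congrFun hfst x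
  -- the section
  let h : ∀ x, D x := fun x => (hfst' x) ▸ (k x).2
  -- k agrees with x ↦ ⟨x, h x⟩
  have hkk : k = fun x => (⟨x, h x⟩ : Y) := by
    funext x
    refine Sigma.ext (hfst' x) ?_
    simp only [h]
    exact (eqRec_heq (hfst' x) (k x).2).symm
  rw [hkk] at hk
  refine ⟨h, fun a g => ?_⟩
  have := hk a g
  simp only [hsup', Function.comp] at this
  rw [Sigma.ext_iff] at this
  exact eq_of_heq this.2
end

section
/- Let P be a polynomial functor on Type u. A P-algebra (X, sup) is inductive if and only if it is initial, i.e. if and only if for every P-algebra (Y, sup') there is exactly one P-algebra homomorphism from (X, sup) to (Y, sup'). -/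
universe u

/-- a `P`-algebra is inductive iff it is initial. -/
theorem inductive_iff_initial {A : Type u} {B : A → Type u}
    (X : Type u) (sup : ∀ a : A, (B a → X) → X) :
    IsInductiveAlg sup ↔ IsInitialAlg sup := by
  constructor
  · intro hind Y sup'
    obtain ⟨h, hh⟩ := hind (fun _ => Y) (fun a _ f => sup' a f)
    refine ⟨h, hh, ?_⟩
    intro k hk
    obtain ⟨e, _⟩ := hind (fun x => ULift.{u} (PLift (k x = h x)))
      (fun a g f => ULift.up (PLift.up (by
        rw [hk a g, hh a g]
        congr 1
        funext b
        exact (f b).down.down)))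
    funext x
    exact (e x).down.down
  · intro hinit D supD
    obtain ⟨k, hk, huniq⟩ := hinit ((x : X) × D x)
      (fun a f => ⟨sup a (fun b => (f b).1), supD a _ (fun b => (f b).2)⟩)
    obtain ⟨j, _, ju⟩ := hinit X sup
    have hfst : (fun x => (k x).1) = id := by
      have h1 : IsAlgHom sup sup (fun x => (k x).1) := by
        intro a g
        show (k (sup a g)).1 = _
        rw [hk a g]
        rfl
      have h2 : IsAlgHom sup sup id := fun a g => rfl
      exact (ju _ h1).trans (ju _ h2).symm
    have p : ∀ x, (k x).1 = x := fun x => congrFun hfst x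
    have key : ∀ (s : (x : X) × D x) (x : X) (h : s.1 = x), s = ⟨x, h ▸ s.2⟩ := by
      rintro ⟨a, d⟩ x rfl; rfl
    set h : ∀ x, D x := fun x => p x ▸ (k x).2 with hdef
    have hkx : ∀ x, k x = ⟨x, h x⟩ := fun x => key (k x) x (p x)
    refine ⟨h, ?_⟩
    intro a g
    have := hk a g
    rw [hkx (sup a g)] at this
    have hcomp : (k ∘ g) = fun b => (⟨g b, h (g b)⟩ : (x : X) × D x) :=
      funext fun b => hkx (g b)
    rw [hcomp] at this
    have h2 := (Sigma.mk.inj_iff.mp this).2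
    exact eq_of_heq h2
end

section
/- Let P be a polynomial functor on Type u and let (X, sup) be an inductive P-algebra. Then every displayed P-algebra over (X, sup) has exactly one section; that is, induction is a proof-irrelevant property. -/
universe u

/-- over an inductive `P`-algebra, every displayed `P`-algebra has
exactly one section. -/
theorem inductive_alg_section_unique {A : Type u} {B : A → Type u}
    (X : Type u) (sup : ∀ a : A, (B a → X) → X)
    (hind : IsInductiveAlg sup)
    (D : X → Type u)
    (supD : ∀ (a : A) (g : B a → X), (∀ b, D (g b)) → D (sup a g)) :
    ∃! h : ∀ x, D x,
      ∀ (a : A) (g : B a → X), h (sup a g) = supD a g (fun b => h (g b)) := by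
  obtain ⟨h, hh⟩ := hind D supD
  refine ⟨h, hh, ?_⟩
  intro h' hh'
  have key : ∀ x, h' x = h x := by
    obtain ⟨e, -⟩ := hind (fun x => ULift.{u} (PLift (h' x = h x)))
      (fun a g ih => ⟨⟨by
        rw [hh a g, hh' a g]
        congr 1
        funext b
        exact (ih b).down.down⟩⟩)
    exact fun x => (e x).down.down
  funext x; exact key x
end

section
/- Let P be a polynomial functor on Type u and let (X, sup), (Y, sup') be P-algebras that are isomorphic, i.e. there exist P-algebra homomorphisms k : X → Y and k' : Y → X with k' ∘ k = id and k ∘ k' = id. If (X, sup) is inductive, then (Y, sup') is inductive. -/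
universe u

/-- inductivity of `P`-algebras is invariant under algebra
isomorphism. -/
theorem inductive_invariant_under_iso {A : Type u} {B : A → Type u}
    (X Y : Type u)
    (sup : ∀ a : A, (B a → X) → X) (sup' : ∀ a : A, (B a → Y) → Y)
    (k : X → Y) (k' : Y → X)
    (hk : IsAlgHom sup sup' k) (hk' : IsAlgHom sup' sup k')
    (hk'k : k' ∘ k = id) (hkk' : k ∘ k' = id)
    (hind : IsInductiveAlg sup) :
    IsInductiveAlg sup' := by
  intro D supD
  have hkk'' : ∀ y, k (k' y) = y := fun y => congrFun hkk' y
  have supcong : ∀ (a : A) (f g : B a → Y) (e : f = g)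
      (d : ∀ b, D (f b)) (d' : ∀ b, D (g b)),
      (∀ b, HEq (d b) (d' b)) → HEq (supD a f d) (supD a g d') := by
    intro a f g e d d' hd
    subst e
    have : d = d' := funext fun b => eq_of_heq (hd b)
    subst this
    rfl
  obtain ⟨h, hh⟩ := hind (fun x => D (k x))
    (fun a g d => cast (congrArg D (hk a g)).symm (supD a (k ∘ g) d))
  refine ⟨fun y => cast (congrArg D (hkk'' y)) (h (k' y)), ?_⟩
  intro a g
  have h1 : HEq (cast (congrArg D (hkk'' (sup' a g))) (h (k' (sup' a g))))
      (h (k' (sup' a g))) := cast_heq _ _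
  have h2 : HEq (h (k' (sup' a g))) (h (sup a (k' ∘ g))) := by rw [hk' a g]
  have h3 : h (sup a (k' ∘ g)) =
      cast (congrArg D (hk a (k' ∘ g))).symm
        (supD a (k ∘ (k' ∘ g)) (fun b => h (k' (g b)))) := hh a (k' ∘ g)
  have h4 : HEq (cast (congrArg D (hk a (k' ∘ g))).symm
        (supD a (k ∘ (k' ∘ g)) (fun b => h (k' (g b)))))
      (supD a (k ∘ (k' ∘ g)) (fun b => h (k' (g b)))) := cast_heq _ _
  have h5 : HEq (supD a (k ∘ (k' ∘ g)) (fun b => h (k' (g b))))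
      (supD a g (fun b => cast (congrArg D (hkk'' (g b))) (h (k' (g b))))) := by
    refine supcong a _ g (funext fun b => hkk'' (g b)) _ _ fun b => ?_
    exact (cast_heq _ _).symm
  exact eq_of_heq (h1.trans (h2.trans ((heq_of_eq h3).trans (h4.trans h5))))
end

section
/- A Tree-algebra (T, node) is inductive (every displayed Tree-algebra over it has a section) if and only if it is initial in the category of Tree-algebras (i.e. for every Tree-algebra (T', node') there is exactly one Tree-algebra homomorphism from (T, node) to (T', node')). -/
/-- A Tree-algebra `(T, node)` (trees branching over arbitrary small types) is
inductive: every displayed Tree-algebra over it has a section. -/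
def TreeAlgInductive {T : Type 1} (node : ∀ A : Type, (A → T) → T) : Prop :=
  ∀ (D : T → Type 1)
    (nodeD : ∀ (A : Type) (g : A → T), (∀ a : A, D (g a)) → D (node A g)),
    ∃ h : ∀ t, D t, ∀ (A : Type) (g : A → T),
      h (node A g) = nodeD A g (fun a => h (g a))

/-- A Tree-algebra `(T, node)` is initial: every Tree-algebra admits exactly
one homomorphism from it. -/
def TreeAlgInitial {T : Type 1} (node : ∀ A : Type, (A → T) → T) : Prop :=
  ∀ (T' : Type 1) (node' : ∀ A : Type, (A → T') → T'),
    ∃! k : T → T', ∀ (A : Type) (g : A → T), k (node A g) = node' A (k ∘ g)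

private theorem treeAlg_key {T : Type 1} (node : ∀ A : Type, (A → T) → T)
    {D : T → Type 1}
    (nodeD : ∀ (A : Type) (g : A → T), (∀ a : A, D (g a)) → D (node A g))
    {A : Type} {g g' : A → T} (hg : g' = g) (d : ∀ a, D (g' a))
    (e : node A g' = node A g) (e2 : ∀ a, g' a = g a) :
    e ▸ nodeD A g' d = nodeD A g (fun a => e2 a ▸ d a) := by
  subst hg; rfl

private theorem treeAlg_cast_snd {T : Type 1} {D : T → Type 1}
    (s s' : Σ t, D t) (hs : s = s') {t : T} (e : s.1 = t) (e' : s'.1 = t) :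
    e ▸ s.2 = e' ▸ s'.2 := by
  subst hs; rfl

/-- a Tree-algebra is inductive iff it is initial. -/
theorem treeAlg_inductive_iff_initial (T : Type 1)
    (node : ∀ A : Type, (A → T) → T) :
    TreeAlgInductive node ↔ TreeAlgInitial node := by
  constructor
  · intro ind T' node'
    obtain ⟨h, hh⟩ := ind (fun _ => T') (fun A _ d => node' A d)
    have uniq : ∀ k₁ k₂ : T → T',
        (∀ (A : Type) (g : A → T), k₁ (node A g) = node' A (k₁ ∘ g)) →
        (∀ (A : Type) (g : A → T), k₂ (node A g) = node' A (k₂ ∘ g)) →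
        k₁ = k₂ := by
      intro k₁ k₂ h₁ h₂
      obtain ⟨p, _⟩ := ind (fun t => ULift.{1} (PLift (k₁ t = k₂ t)))
        (fun A g d => ⟨⟨by
          rw [h₁, h₂]
          exact congrArg (node' A) (funext fun a => (d a).down.down)⟩⟩)
      exact funext fun t => (p t).down.down
    refine ⟨h, fun A g => hh A g, fun k hk => uniq k h hk fun A g => hh A g⟩
  · intro init D nodeD
    obtain ⟨k, hk, _⟩ := init (Σ t, D t)
      (fun A g' => ⟨node A (fun a => (g' a).1), nodeD A _ (fun a => (g' a).2)⟩)
    obtain ⟨m, _, hun⟩ := init T node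
    have hfst : (fun t => (k t).1) = id := by
      have h1 : ∀ (A : Type) (g : A → T),
          (k (node A g)).1 = node A ((fun t => (k t).1) ∘ g) := by
        intro A g; rw [hk]; rfl
      have h2 : ∀ (A : Type) (g : A → T), id (node A g) = node A (id ∘ g) :=
        fun A g => rfl
      exact (hun _ h1).trans (hun _ h2).symm
    have p : ∀ t, (k t).1 = t := fun t => congrFun hfst t
    refine ⟨fun t => p t ▸ (k t).2, fun A g => ?_⟩
    have e : node A (fun a => (k (g a)).1) = node A g :=
      congrArg (node A) (funext fun a => p (g a))
    calc p (node A g) ▸ (k (node A g)).2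
        = e ▸ nodeD A (fun a => (k (g a)).1) (fun a => (k (g a)).2) :=
          treeAlg_cast_snd _ _ (hk A g) _ e
      _ = nodeD A g (fun a => p (g a) ▸ (k (g a)).2) :=
          treeAlg_key node nodeD (funext fun a => p (g a)) _ _ _
end

section
/- There exists an initial Tree-algebra: a Tree-algebra (T, node) such that for every Tree-algebra (T', node') there is exactly one Tree-algebra homomorphism from (T, node) to (T', node'). -/
inductive MyTree : Type 1
  | node : ∀ A : Type, (A → MyTree) → MyTree

noncomputable def treeRec {T' : Type 1} (node' : ∀ A : Type, (A → T') → T') :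
    MyTree → T'
  | .node A g => node' A (fun a => treeRec node' (g a))

/-- there exists an initial Tree-algebra, i.e. a type `T : Type 1`
with `node : ∀ A : Type, (A → T) → T` such that every Tree-algebra admits
exactly one Tree-algebra homomorphism from `(T, node)`. -/
theorem exists_initial_treeAlgebra :
    ∃ (T : Type 1) (node : ∀ A : Type, (A → T) → T),
      ∀ (T' : Type 1) (node' : ∀ A : Type, (A → T') → T'),
        ∃! k : T → T', ∀ (A : Type) (g : A → T), k (node A g) = node' A (k ∘ g) := by
  refine ⟨MyTree, MyTree.node, fun T' node' => ⟨treeRec node', fun A g => rfl, ?_⟩⟩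
  intro k hk
  funext t
  induction t with
  | node A g ih =>
    rw [hk]
    simp only [treeRec, Function.comp]
    congr 1
    funext a
    exact ih a
end

section
/- A RecEq-algebra (A, a, f) is inductive (every displayed RecEq-algebra over it has a section) if and only if it is initial in the category of RecEq-algebras (i.e. for every RecEq-algebra (A', a', f') there is exactly one RecEq-algebra homomorphism from (A, a, f) to (A', a', f')). -/
universe u

/-- `k` is a RecEq-algebra homomorphism from `(A, a, f)` to `(A', a', f')`:
it preserves the point `a`, and preserves `f` where the equality assumption is
transported along `k` using the preservation of the point. -/
def RecEqHom {A A' : Type u} (a : A) (f : ∀ x : A, x = a → A)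
    (a' : A') (f' : ∀ x : A', x = a' → A') (k : A → A') : Prop :=
  ∃ hz : k a = a',
    ∀ (x : A) (e : x = a), k (f x e) = f' (k x) ((congrArg k e).trans hz)

/-- A RecEq-algebra `(A, a, f)` is inductive: every displayed RecEq-algebra
over it has a section. -/
def RecEqInductive {A : Type u} (a : A) (f : ∀ x : A, x = a → A) : Prop :=
  ∀ (D : A → Type u) (aD : D a)
    (fD : ∀ (x : A) (e : x = a), D x → D (f x e)),
    ∃ h : ∀ x, D x, h a = aD ∧ ∀ (x : A) (e : x = a), h (f x e) = fD x e (h x)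

/-- A RecEq-algebra `(A, a, f)` is initial: every RecEq-algebra admits exactly
one homomorphism from it. -/
def RecEqInitial {A : Type u} (a : A) (f : ∀ x : A, x = a → A) : Prop :=
  ∀ (A' : Type u) (a' : A') (f' : ∀ x : A', x = a' → A'),
    ∃! k : A → A', RecEqHom a f a' f' k

theorem recEq_fcongr {A' : Type u} {a' : A'} (f' : ∀ x : A', x = a' → A')
    {s t : A'} (hst : s = t) (e1 : s = a') (e2 : t = a') :
    f' s e1 = f' t e2 := by subst hst; rfl

theorem recEq_sig_eta {A : Type u} {D : A → Type u} (s : Σ x, D x) (x : A)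
    (p : s.1 = x) : s = ⟨x, p ▸ s.2⟩ := by
  cases s; subst p; rfl

theorem recEq_aux_snd {A : Type u} {D : A → Type u} {s : Σ x, D x} {x : A}
    {d : D x} (hs : s = ⟨x, d⟩) (p : s.1 = x) : p ▸ s.2 = d := by
  subst hs; rfl

/-- a RecEq-algebra is inductive iff it is initial. -/
theorem recEqAlg_inductive_iff_initial (A : Type u) (a : A)
    (f : ∀ x : A, x = a → A) :
    RecEqInductive a f ↔ RecEqInitial a f := by
  constructor
  · intro hind A' a' f'
    -- first, inductivity implies `f x e ≠ a`
    have hne : ∀ (x : A) (e : x = a), f x e ≠ a := by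
      intro x e hfa
      obtain ⟨h, h0, hs⟩ := hind (fun _ => ULift.{u} ℕ) ⟨0⟩
        (fun _ _ n => ⟨n.down + 1⟩)
      have h1 := hs x e
      rw [hfa, h0] at h1
      subst e
      rw [h0] at h1
      exact Nat.succ_ne_zero 0 (congrArg ULift.down h1).symm
    obtain ⟨h, h0, hs⟩ := hind (fun x => {y : A' // x = a → y = a'})
      ⟨a', fun _ => rfl⟩
      (fun x e d => ⟨f' d.1 (d.2 e), fun q => absurd q (hne x e)⟩)
    have hz : (fun x => (h x).1) a = a' := congrArg Subtype.val h0
    refine ⟨fun x => (h x).1, ⟨hz, ?_⟩, ?_⟩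
    · intro x e
      exact (congrArg (fun d => d.1) (hs x e)).trans
        (recEq_fcongr f' rfl ((h x).2 e) _)
    · rintro k' ⟨hz', hc'⟩
      obtain ⟨g, g0, gs⟩ := hind (fun x => ULift.{u} (PLift (k' x = (h x).1)))
        ⟨⟨hz'.trans hz.symm⟩⟩
        (fun x e d => ⟨⟨by
          rw [hc' x e]
          exact (recEq_fcongr f' d.down.down _ ((h x).2 e)).trans
            (congrArg Subtype.val (hs x e)).symm⟩⟩)
      funext x
      exact (g x).down.down
  · intro hinit D aD fD
    obtain ⟨k, ⟨hz, hc⟩, huniq⟩ := hinit (Σ x, D x) ⟨a, aD⟩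
      (fun s es => ⟨f s.1 (congrArg Sigma.fst es),
        fD s.1 (congrArg Sigma.fst es) s.2⟩)
    have hom1 : RecEqHom a f a f (fun x => (k x).1) :=
      ⟨congrArg Sigma.fst hz, fun x e => by
        refine (congrArg Sigma.fst (hc x e)).trans ?_
        exact recEq_fcongr f rfl _ _⟩
    have hom2 : RecEqHom a f a f id :=
      ⟨rfl, fun x e => recEq_fcongr f rfl _ _⟩
    obtain ⟨m, -, mu⟩ := hinit A a f
    have px : ∀ x, (k x).1 = x := fun x =>
      congrFun ((mu _ hom1).trans (mu _ hom2).symm) x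
    refine ⟨fun x => px x ▸ (k x).2, ?_, ?_⟩
    · exact recEq_aux_snd hz (px a)
    · intro x e
      have kp : k x = ⟨x, px x ▸ (k x).2⟩ := recEq_sig_eta (k x) x (px x)
      have e'' : (⟨x, px x ▸ (k x).2⟩ : Σ x, D x) = ⟨a, aD⟩ :=
        kp.symm.trans ((congrArg k e).trans hz)
      have hs2 : k (f x e) = ⟨f x e, fD x e (px x ▸ (k x).2)⟩ :=
        (hc x e).trans (recEq_fcongr
          (fun s es => (⟨f s.1 (congrArg Sigma.fst es),
            fD s.1 (congrArg Sigma.fst es) s.2⟩ : Σ x, D x))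
          kp ((congrArg k e).trans hz) e'')
      exact recEq_aux_snd hs2 (px (f x e))
end
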